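/- For Hermitian matrices A, B, a density matrix ρ, and 1/2 ≤ λ < 1: I_ρ(A−B) + I_ρ(((λ−1)/λ)A − B) ≤ (1/λ)I_ρ(A) + (1/(1−λ))I_ρ(B) ≤ I_ρ(A−B) + I_ρ(A − (λ/(λ−1))B), with equality throughout when λ = 1/2. -/

import Mathlib

open Matrix Finset
open scoped ComplexOrder

/-- Wigner–Yanase skew information `I_ρ(H) = (1/2)‖[√ρ, H]‖²` (Frobenius norm). -/
noncomputable def skewInfoR {d : ℕ} {ρ : Matrix (Fin d) (Fin d) ℂ}
    (hρ : ρ.PosSemidef) (H : Matrix (Fin d) (Fin d) ℂ) : ℝ :=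
  1 / 2 * ∑ i, ∑ j, ‖((hρ.1.eigenvectorUnitary.1 * diagonal (((↑) : ℝ → ℂ) ∘ (√·) ∘ hρ.1.eigenvalues) *
      (star hρ.1.eigenvectorUnitary : Matrix (Fin d) (Fin d) ℂ)) * H -
    H * (hρ.1.eigenvectorUnitary.1 * diagonal (((↑) : ℝ → ℂ) ∘ (√·) ∘ hρ.1.eigenvalues) *
      (star hρ.1.eigenvectorUnitary : Matrix (Fin d) (Fin d) ℂ))) i j‖ ^ 2

/-! In a real inner product space, for `0 < λ < 1` both gaps in Bohr's inequality are explicit: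
`(1/λ)‖u‖² + (1/(1-λ))‖v‖² - ‖u - v‖² - ‖((λ-1)/λ) u - v‖²` and
`‖u - v‖² + ‖u - (λ/(λ-1)) v‖² - (1/λ)‖u‖² - (1/(1-λ))‖v‖²` are `2λ - 1` times positive multiples
of `‖(1-λ) u + λ v‖²`. These identities add up over the entries of `U = [√ρ, A]`, `V = [√ρ, B]`,
and `H ↦ [√ρ, H]` is linear, so both gaps for `I_ρ` are nonnegative when `λ ≥ 1/2` and vanish at
`λ = 1/2`. -/

section Bohr

variable {E : Type*} [NormedAddCommGroup E] [InnerProductSpace ℝ E]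

theorem norm_smul_add_smul_sq (a b : ℝ) (u v : E) :
    ‖a • u + b • v‖ ^ 2 = a ^ 2 * ‖u‖ ^ 2 + 2 * (a * b) * inner ℝ u v + b ^ 2 * ‖v‖ ^ 2 := by
  rw [norm_add_sq_real, norm_smul, norm_smul, real_inner_smul_left, real_inner_smul_right,
    mul_pow, mul_pow, Real.norm_eq_abs, Real.norm_eq_abs, sq_abs, sq_abs]
  ring

theorem bohr_lower_identity {lam : ℝ} (h₀ : lam ≠ 0) (h₁ : lam ≠ 1) (u v : E) :
    1 / lam * ‖u‖ ^ 2 + 1 / (1 - lam) * ‖v‖ ^ 2 - (‖u - v‖ ^ 2 + ‖((lam - 1) / lam) • u - v‖ ^ 2)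
      = (2 * lam - 1) / (lam ^ 2 * (1 - lam)) * ‖(1 - lam) • u + lam • v‖ ^ 2 := by
  have : 1 - lam ≠ 0 := sub_ne_zero.mpr h₁.symm
  rw [show u - v = (1 : ℝ) • u + (-1 : ℝ) • v by module,
    show ((lam - 1) / lam) • u - v = ((lam - 1) / lam) • u + (-1 : ℝ) • v by module]
  simp only [norm_smul_add_smul_sq]
  field_simp
  ring

theorem bohr_upper_identity {lam : ℝ} (h₀ : lam ≠ 0) (h₁ : lam ≠ 1) (u v : E) :
    ‖u - v‖ ^ 2 + ‖u - (lam / (lam - 1)) • v‖ ^ 2 - (1 / lam * ‖u‖ ^ 2 + 1 / (1 - lam) * ‖v‖ ^ 2)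
      = (2 * lam - 1) / (lam * (1 - lam) ^ 2) * ‖(1 - lam) • u + lam • v‖ ^ 2 := by
  have : 1 - lam ≠ 0 := sub_ne_zero.mpr h₁.symm
  have : lam - 1 ≠ 0 := sub_ne_zero.mpr h₁
  rw [show u - v = (1 : ℝ) • u + (-1 : ℝ) • v by module,
    show u - (lam / (lam - 1)) • v = (1 : ℝ) • u + (-(lam / (lam - 1))) • v by module]
  simp only [norm_smul_add_smul_sq]
  field_simp
  ring

end Bohr

section Frobenius

variable {E : Type*} [NormedAddCommGroup E] {m n : Type*} [Fintype m] [Fintype n]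

def frobeniusNormSq (M : Matrix m n E) : ℝ :=
  ∑ i, ∑ j, ‖M i j‖ ^ 2

theorem frobeniusNormSq_nonneg (M : Matrix m n E) : 0 ≤ frobeniusNormSq M := by
  unfold frobeniusNormSq
  positivity

variable [InnerProductSpace ℝ E]

theorem frobeniusNormSq_bohr_lower_identity {lam : ℝ} (h₀ : lam ≠ 0) (h₁ : lam ≠ 1)
    (U V : Matrix m n E) :
    1 / lam * frobeniusNormSq U + 1 / (1 - lam) * frobeniusNormSq V -
        (frobeniusNormSq (U - V) + frobeniusNormSq (((lam - 1) / lam) • U - V))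
      = (2 * lam - 1) / (lam ^ 2 * (1 - lam)) * frobeniusNormSq ((1 - lam) • U + lam • V) := by
  simp only [frobeniusNormSq, Finset.mul_sum, ← Finset.sum_add_distrib, ← Finset.sum_sub_distrib]
  refine Finset.sum_congr rfl fun i _ => Finset.sum_congr rfl fun j _ => ?_
  exact bohr_lower_identity h₀ h₁ (U i j) (V i j)

theorem frobeniusNormSq_bohr_upper_identity {lam : ℝ} (h₀ : lam ≠ 0) (h₁ : lam ≠ 1)
    (U V : Matrix m n E) :
    frobeniusNormSq (U - V) + frobeniusNormSq (U - (lam / (lam - 1)) • V) -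
        (1 / lam * frobeniusNormSq U + 1 / (1 - lam) * frobeniusNormSq V)
      = (2 * lam - 1) / (lam * (1 - lam) ^ 2) * frobeniusNormSq ((1 - lam) • U + lam • V) := by
  simp only [frobeniusNormSq, Finset.mul_sum, ← Finset.sum_add_distrib, ← Finset.sum_sub_distrib]
  refine Finset.sum_congr rfl fun i _ => Finset.sum_congr rfl fun j _ => ?_
  exact bohr_upper_identity h₀ h₁ (U i j) (V i j)

end Frobenius

namespace Matrix.PosSemidef

variable {d : ℕ} {ρ : Matrix (Fin d) (Fin d) ℂ}

noncomputable def spectralSqrt (hρ : ρ.PosSemidef) : Matrix (Fin d) (Fin d) ℂ :=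
  hρ.1.eigenvectorUnitary.1 * diagonal (((↑) : ℝ → ℂ) ∘ (√·) ∘ hρ.1.eigenvalues) *
    (star hρ.1.eigenvectorUnitary : Matrix (Fin d) (Fin d) ℂ)

noncomputable def sqrtCommutator (hρ : ρ.PosSemidef) :
    Matrix (Fin d) (Fin d) ℂ →ₗ[ℝ] Matrix (Fin d) (Fin d) ℂ :=
  LinearMap.mulLeft ℝ hρ.spectralSqrt - LinearMap.mulRight ℝ hρ.spectralSqrt

end Matrix.PosSemidef

theorem skewInfoR_eq_half_frobeniusNormSq {d : ℕ} {ρ : Matrix (Fin d) (Fin d) ℂ}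
    (hρ : ρ.PosSemidef) (H : Matrix (Fin d) (Fin d) ℂ) :
    skewInfoR hρ H = 1 / 2 * frobeniusNormSq (hρ.sqrtCommutator H) :=
  rfl

theorem skewInfo_weighted_uncertainty_general {d : ℕ} (ρ A B : Matrix (Fin d) (Fin d) ℂ)
    (hρ : ρ.PosSemidef)
    (lam : ℝ) (hl1 : 1 / 2 ≤ lam) (hl2 : lam < 1) :
    (skewInfoR hρ (A - B) + skewInfoR hρ (((((lam - 1) / lam : ℝ)) : ℂ) • A - B) ≤
        (1 / lam) * skewInfoR hρ A + (1 / (1 - lam)) * skewInfoR hρ B ∧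
      (1 / lam) * skewInfoR hρ A + (1 / (1 - lam)) * skewInfoR hρ B ≤
        skewInfoR hρ (A - B) + skewInfoR hρ (A - (((lam / (lam - 1) : ℝ)) : ℂ) • B)) ∧
    (lam = 1 / 2 →
      skewInfoR hρ (A - B) + skewInfoR hρ (((((lam - 1) / lam : ℝ)) : ℂ) • A - B) =
          (1 / lam) * skewInfoR hρ A + (1 / (1 - lam)) * skewInfoR hρ B ∧
        (1 / lam) * skewInfoR hρ A + (1 / (1 - lam)) * skewInfoR hρ B =
          skewInfoR hρ (A - B) + skewInfoR hρ (A - (((lam / (lam - 1) : ℝ)) : ℂ) • B)) := by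
  have h₀ : lam ≠ 0 := by linarith
  have h₁ : lam ≠ 1 := hl2.ne
  have hk₁ : 0 ≤ (2 * lam - 1) / (lam ^ 2 * (1 - lam)) :=
    div_nonneg (by linarith) (mul_nonneg (sq_nonneg _) (by linarith))
  have hk₂ : 0 ≤ (2 * lam - 1) / (lam * (1 - lam) ^ 2) :=
    div_nonneg (by linarith) (mul_nonneg (by linarith) (sq_nonneg _))
  set U := hρ.sqrtCommutator A
  set V := hρ.sqrtCommutator B
  have hlower := frobeniusNormSq_bohr_lower_identity h₀ h₁ U V
  have hupper := frobeniusNormSq_bohr_upper_identity h₀ h₁ U V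
  have hW := frobeniusNormSq_nonneg ((1 - lam) • U + lam • V)
  simp only [skewInfoR_eq_half_frobeniusNormSq, Complex.coe_smul, map_sub, map_smul]
  refine ⟨⟨by linarith [mul_nonneg hk₁ hW], by linarith [mul_nonneg hk₂ hW]⟩, fun hhalf => ?_⟩
  have hk : 2 * lam - 1 = 0 := by linarith
  rw [hk, zero_div, zero_mul] at hlower hupper
  constructor <;> linarith

theorem skewInfo_weighted_uncertainty {d : ℕ} (ρ A B : Matrix (Fin d) (Fin d) ℂ)
    (hρ : ρ.PosSemidef) (hτ : ρ.trace = 1)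
    (hA : A.IsHermitian) (hB : B.IsHermitian)
    (lam : ℝ) (hl1 : 1 / 2 ≤ lam) (hl2 : lam < 1) :
    (skewInfoR hρ (A - B) + skewInfoR hρ (((((lam - 1) / lam : ℝ)) : ℂ) • A - B) ≤
        (1 / lam) * skewInfoR hρ A + (1 / (1 - lam)) * skewInfoR hρ B ∧
      (1 / lam) * skewInfoR hρ A + (1 / (1 - lam)) * skewInfoR hρ B ≤
        skewInfoR hρ (A - B) + skewInfoR hρ (A - (((lam / (lam - 1) : ℝ)) : ℂ) • B)) ∧
    (lam = 1 / 2 →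
      skewInfoR hρ (A - B) + skewInfoR hρ (((((lam - 1) / lam : ℝ)) : ℂ) • A - B) =
          (1 / lam) * skewInfoR hρ A + (1 / (1 - lam)) * skewInfoR hρ B ∧
        (1 / lam) * skewInfoR hρ A + (1 / (1 - lam)) * skewInfoR hρ B =
          skewInfoR hρ (A - B) + skewInfoR hρ (A - (((lam / (lam - 1) : ℝ)) : ℂ) • B)) :=
  skewInfo_weighted_uncertainty_general ρ A B hρ lam hl1 hl2
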